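/- arXiv:2008.09882 — 3 statements merged into one kernel-verified Lean document; each statement's English description precedes it below -/
import Mathlib

section
/- Let (Z1, Z2) be a bivariate standard Gaussian random vector with correlation ρ ∈ (-1,1), and let η1, η2 ∈ ℝ. Then P(Z1 ≥ η1, Z2 ≥ η2) = P(Z1 ≥ η1)·P(Z2 ≥ η2) + ∫₀^ρ φ₂(η1, η2 | x) dx, where φ₂(·,·|x) is the density of a bivariate standard Gaussian with correlation x. -/
/-! Write `G(x)` for the integral of `φ₂(·,·|x)` over `[η₁,∞) × [η₂,∞)`. The density satisfies
the heat-type identity `∂φ₂/∂x = ∂²φ₂/∂u∂v`, so differentiating under the integral sign and then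
integrating the mixed derivative out in `v` and in `u` gives `G'(x) = φ₂(η₁,η₂|x)`. At `x = 0`
the density factorizes, so `G(0) = P(Z₁ ≥ η₁) P(Z₂ ≥ η₂)`, and the fundamental theorem of
calculus on `[0, ρ]` gives the claim. Every interchange is justified by the majorant
`exp(-u²/8) exp(-v²/8)`, which dominates `φ₂` and its derivatives uniformly in `x` as long as
`1 - x²` stays away from `0`. -/

open MeasureTheory Real Set Filter Topology

noncomputable def phi2 (u v x : ℝ) : ℝ :=
  (1 / (2 * Real.pi * Real.sqrt (1 - x ^ 2))) *
    Real.exp (-(u ^ 2 - 2 * x * u * v + v ^ 2) / (2 * (1 - x ^ 2)))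

noncomputable def stdGaussPDF (z : ℝ) : ℝ :=
  (Real.sqrt (2 * Real.pi))⁻¹ * Real.exp (-z ^ 2 / 2)

lemma integral_Ioi_of_hasDerivAt_of_integrableOn {E : Type*} [NormedAddCommGroup E]
    [NormedSpace ℝ E] [CompleteSpace E] {f f' : ℝ → E} {a : ℝ}
    (hderiv : ∀ x ∈ Ici a, HasDerivAt f (f' x) x) (f'int : IntegrableOn f' (Ioi a))
    (fint : IntegrableOn f (Ioi a)) : ∫ x in Ioi a, f' x = -f a := by
  simpa using integral_Ioi_of_hasDerivAt_of_tendsto' hderiv f'int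
    (tendsto_zero_of_hasDerivAt_of_integrableOn_Ioi (fun x hx => hderiv x hx.out.le) f'int fint)

lemma phi2_comm (u v x : ℝ) : phi2 u v x = phi2 v u x := by
  unfold phi2; ring_nf

lemma phi2_nonneg (u v x : ℝ) : 0 ≤ phi2 u v x := by
  unfold phi2; positivity

lemma phi2_zero (u v : ℝ) : phi2 u v 0 = stdGaussPDF u * stdGaussPDF v := by
  have h2π : √(2 * π) ^ 2 = 2 * π := sq_sqrt (by positivity)
  unfold phi2 stdGaussPDF
  rw [mul_mul_mul_comm, ← exp_add, ← mul_inv, ← sq, h2π]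
  norm_num
  ring_nf

noncomputable def phi2DerivFst (u v x : ℝ) : ℝ :=
  phi2 u v x * ((x * v - u) / (1 - x ^ 2))

noncomputable def phi2DerivFstSnd (u v x : ℝ) : ℝ :=
  phi2 u v x * (x / (1 - x ^ 2) + (x * v - u) * (x * u - v) / (1 - x ^ 2) ^ 2)

lemma hasDerivAt_phi2_fst (u v x : ℝ) :
    HasDerivAt (phi2 · v x) (phi2DerivFst u v x) u := by
  have hQ : HasDerivAt (fun u : ℝ => -(u ^ 2 - 2 * x * u * v + v ^ 2) / (2 * (1 - x ^ 2)))
      ((x * v - u) / (1 - x ^ 2)) u := by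
    refine ((hasDerivAt_pow 2 u).sub (((hasDerivAt_id u).const_mul (2 * x)).mul_const v)
      |>.add_const (v ^ 2) |>.neg |>.div_const (2 * (1 - x ^ 2))).congr_deriv ?_
    field_simp
    ring
  refine (hQ.exp.const_mul (1 / (2 * π * √(1 - x ^ 2)))).congr_deriv ?_
  unfold phi2DerivFst phi2; ring

lemma hasDerivAt_phi2_snd (u v x : ℝ) :
    HasDerivAt (phi2 u · x) (phi2 u v x * ((x * u - v) / (1 - x ^ 2))) v := by
  simpa only [phi2_comm _ u, phi2DerivFst] using hasDerivAt_phi2_fst v u x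

lemma hasDerivAt_phi2DerivFst_snd (u v x : ℝ) :
    HasDerivAt (phi2DerivFst u · x) (phi2DerivFstSnd u v x) v := by
  have h := (((hasDerivAt_id v).const_mul x).sub_const u).div_const (1 - x ^ 2)
  refine ((hasDerivAt_phi2_snd u v x).mul h).congr_deriv ?_
  unfold phi2DerivFstSnd
  generalize 1 - x ^ 2 = s
  simp only [id, mul_one]
  ring

lemma hasDerivAt_phi2_corr (u v : ℝ) {x : ℝ} (hx : 0 < 1 - x ^ 2) :
    HasDerivAt (phi2 u v) (phi2DerivFstSnd u v x) x := by
  have hs : HasDerivAt (fun x : ℝ => 1 - x ^ 2) (-(2 * x)) x := by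
    simpa using (hasDerivAt_pow 2 x).const_sub 1
  have hsqrt : √(1 - x ^ 2) ^ 2 = 1 - x ^ 2 := sq_sqrt hx.le
  have hpre : HasDerivAt (fun x : ℝ => 1 / (2 * π * √(1 - x ^ 2)))
      (x / (2 * π * √(1 - x ^ 2) * (1 - x ^ 2))) x := by
    refine ((hasDerivAt_const x (1 : ℝ)).fun_div ((hs.sqrt hx.ne').const_mul (2 * π))
      (by positivity)).congr_deriv ?_
    field_simp
    rw [hsqrt]
    ring
  have hQ : HasDerivAt (fun x : ℝ => -(u ^ 2 - 2 * x * u * v + v ^ 2) / (2 * (1 - x ^ 2)))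
      ((u * v * (1 - x ^ 2) - x * (u ^ 2 - 2 * x * u * v + v ^ 2)) / (1 - x ^ 2) ^ 2) x := by
    refine (((((hasDerivAt_id' x).const_mul 2).mul_const u).mul_const v).const_sub (u ^ 2)
      |>.add_const (v ^ 2) |>.fun_neg |>.fun_div (hs.const_mul 2) (by positivity)).congr_deriv ?_
    field_simp
  refine (hpre.mul hQ.exp).congr_deriv ?_
  unfold phi2DerivFstSnd phi2
  field_simp
  ring

noncomputable def gaussianMajorant (u v : ℝ) : ℝ :=
  exp (-(1 / 8) * u ^ 2) * exp (-(1 / 8) * v ^ 2)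

lemma integrable_gaussianMajorant :
    Integrable (fun p : ℝ × ℝ => gaussianMajorant p.1 p.2) := by
  rw [Measure.volume_eq_prod]
  exact (integrable_exp_neg_mul_sq (by norm_num)).mul_prod
    (integrable_exp_neg_mul_sq (by norm_num))

lemma integrable_of_abs_le_gaussianMajorant {f : ℝ × ℝ → ℝ} (hf : Continuous f) {C : ℝ}
    (hC : ∀ p, |f p| ≤ C * gaussianMajorant p.1 p.2) : Integrable f :=
  (integrable_gaussianMajorant.const_mul C).mono' hf.aestronglyMeasurable
    (Eventually.of_forall hC)

lemma integrable_of_abs_le_gaussianMajorant_fst {f : ℝ → ℝ} (hf : Continuous f) {C v : ℝ}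
    (hC : ∀ u, |f u| ≤ C * gaussianMajorant u v) : Integrable f := by
  refine (((integrable_exp_neg_mul_sq (b := 1 / 8) (by norm_num)).mul_const
    (exp (-(1 / 8) * v ^ 2))).const_mul C).mono' hf.aestronglyMeasurable
    (Eventually.of_forall fun u => ?_)
  simpa only [Real.norm_eq_abs, gaussianMajorant, mul_assoc] using hC u

lemma integrable_of_abs_le_gaussianMajorant_snd {f : ℝ → ℝ} (hf : Continuous f) {C u : ℝ}
    (hC : ∀ v, |f v| ≤ C * gaussianMajorant u v) : Integrable f := by
  refine (((integrable_exp_neg_mul_sq (b := 1 / 8) (by norm_num)).const_mul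
    (exp (-(1 / 8) * u ^ 2))).const_mul C).mono' hf.aestronglyMeasurable
    (Eventually.of_forall fun v => ?_)
  simpa only [Real.norm_eq_abs, gaussianMajorant] using hC v

lemma exp_phi2_le {x : ℝ} (hx : 0 < 1 - x ^ 2) (u v : ℝ) :
    exp (-(u ^ 2 - 2 * x * u * v + v ^ 2) / (2 * (1 - x ^ 2))) ≤ exp (-(u ^ 2 + v ^ 2) / 4) := by
  rw [exp_le_exp, div_le_div_iff₀ (by positivity) (by norm_num)]
  nlinarith [sq_nonneg (x * u - v), sq_nonneg (x * v - u)]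

lemma one_add_sq_add_sq_mul_exp_le (u v : ℝ) :
    (1 + u ^ 2 + v ^ 2) * exp (-(u ^ 2 + v ^ 2) / 4) ≤ 8 * gaussianMajorant u v := by
  have h : 1 + u ^ 2 + v ^ 2 ≤ 8 * exp ((u ^ 2 + v ^ 2) / 8) := by
    nlinarith [add_one_le_exp ((u ^ 2 + v ^ 2) / 8)]
  calc (1 + u ^ 2 + v ^ 2) * exp (-(u ^ 2 + v ^ 2) / 4)
      ≤ 8 * exp ((u ^ 2 + v ^ 2) / 8) * exp (-(u ^ 2 + v ^ 2) / 4) := by gcongr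
    _ = 8 * gaussianMajorant u v := by
      rw [gaussianMajorant, mul_assoc, ← exp_add, ← exp_add]; ring_nf

lemma abs_phi2_mul_le {δ x : ℝ} (hδ : 0 < δ) (hδx : δ ≤ 1 - x ^ 2) {u v w c : ℝ}
    (hw : |w| ≤ c * (1 + u ^ 2 + v ^ 2)) :
    |phi2 u v x * w| ≤ c * (8 / (2 * π * √δ)) * gaussianMajorant u v := by
  have hx : 0 < 1 - x ^ 2 := hδ.trans_le hδx
  have hc : 0 ≤ c := nonneg_of_mul_nonneg_left ((abs_nonneg w).trans hw) (by positivity)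
  have hphi : phi2 u v x ≤ 1 / (2 * π * √δ) * exp (-(u ^ 2 + v ^ 2) / 4) := by
    unfold phi2
    exact mul_le_mul (by gcongr) (exp_phi2_le hx u v) (by positivity) (by positivity)
  calc |phi2 u v x * w| = phi2 u v x * |w| := by rw [abs_mul, abs_of_nonneg (phi2_nonneg u v x)]
    _ ≤ 1 / (2 * π * √δ) * exp (-(u ^ 2 + v ^ 2) / 4) * (c * (1 + u ^ 2 + v ^ 2)) := by
      gcongr
    _ = c / (2 * π * √δ) * ((1 + u ^ 2 + v ^ 2) * exp (-(u ^ 2 + v ^ 2) / 4)) := by ring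
    _ ≤ c / (2 * π * √δ) * (8 * gaussianMajorant u v) :=
      mul_le_mul_of_nonneg_left (one_add_sq_add_sq_mul_exp_le u v) (by positivity)
    _ = c * (8 / (2 * π * √δ)) * gaussianMajorant u v := by ring

lemma abs_sub_le_of_sq_le_one {x : ℝ} (hx : x ^ 2 ≤ 1) (u v : ℝ) :
    |x * v - u| ≤ |u| + |v| := by
  have : |x| ≤ 1 := by rwa [← sq_le_one_iff_abs_le_one]
  calc |x * v - u| ≤ |x| * |v| + |u| := by rw [← abs_mul]; exact abs_sub _ _
    _ ≤ |u| + |v| := by nlinarith [abs_nonneg v]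

lemma abs_phi2_le {δ x : ℝ} (hδ : 0 < δ) (hδx : δ ≤ 1 - x ^ 2) (u v : ℝ) :
    |phi2 u v x| ≤ 8 / (2 * π * √δ) * gaussianMajorant u v := by
  simpa using abs_phi2_mul_le hδ hδx (w := 1) (c := 1) (u := u) (v := v)
    (by rw [abs_one, one_mul]; nlinarith [sq_nonneg u, sq_nonneg v])

lemma abs_phi2DerivFst_le {δ x : ℝ} (hδ : 0 < δ) (hδx : δ ≤ 1 - x ^ 2) (u v : ℝ) :
    |phi2DerivFst u v x| ≤ 1 / δ * (8 / (2 * π * √δ)) * gaussianMajorant u v := by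
  refine abs_phi2_mul_le hδ hδx ?_
  have hnum : |x * v - u| ≤ 1 + u ^ 2 + v ^ 2 := by
    have := abs_sub_le_of_sq_le_one (by linarith) u v
    nlinarith [sq_abs u, sq_abs v, sq_nonneg (|u| - 1), sq_nonneg (|v| - 1)]
  rw [abs_div, abs_of_pos (hδ.trans_le hδx), one_div_mul_eq_div]
  exact div_le_div₀ (by positivity) hnum hδ hδx

lemma abs_phi2DerivFstSnd_le {δ x : ℝ} (hδ : 0 < δ) (hδx : δ ≤ 1 - x ^ 2) (u v : ℝ) :
    |phi2DerivFstSnd u v x| ≤ 2 / δ ^ 2 * (8 / (2 * π * √δ)) * gaussianMajorant u v := by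
  refine abs_phi2_mul_le hδ hδx ?_
  have hx : 0 < 1 - x ^ 2 := hδ.trans_le hδx
  have hx1 : x ^ 2 ≤ 1 := by linarith
  have hδ1 : δ ^ 2 ≤ δ := by nlinarith
  have h1 : |x / (1 - x ^ 2)| ≤ 1 / δ ^ 2 := by
    rw [abs_div, abs_of_pos hx]
    calc |x| / (1 - x ^ 2) ≤ 1 / δ := div_le_div₀ zero_le_one
          ((sq_le_one_iff_abs_le_one x).1 hx1) hδ hδx
      _ ≤ 1 / δ ^ 2 := one_div_le_one_div_of_le (by positivity) hδ1
  have h2 : |(x * v - u) * (x * u - v) / (1 - x ^ 2) ^ 2| ≤ 2 * (u ^ 2 + v ^ 2) / δ ^ 2 := by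
    rw [abs_div, abs_mul, abs_of_pos (pow_pos hx 2)]
    have hu := abs_sub_le_of_sq_le_one hx1 u v
    have hv := abs_sub_le_of_sq_le_one hx1 v u
    refine div_le_div₀ (by positivity) ?_ (by positivity) (by gcongr)
    nlinarith [sq_abs u, sq_abs v, sq_nonneg (|u| - |v|), abs_nonneg (x * v - u),
      abs_nonneg (x * u - v)]
  calc |x / (1 - x ^ 2) + (x * v - u) * (x * u - v) / (1 - x ^ 2) ^ 2|
      ≤ 1 / δ ^ 2 + 2 * (u ^ 2 + v ^ 2) / δ ^ 2 := (abs_add_le _ _).trans (add_le_add h1 h2)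
    _ ≤ 2 / δ ^ 2 * (1 + u ^ 2 + v ^ 2) := by
      rw [← add_div, div_mul_eq_mul_div]
      gcongr
      linarith

lemma integral_Ici_phi2DerivFstSnd (u a : ℝ) {x : ℝ} (hx : 0 < 1 - x ^ 2) :
    ∫ v in Ici a, phi2DerivFstSnd u v x = -phi2DerivFst u a x := by
  rw [integral_Ici_eq_integral_Ioi]
  refine integral_Ioi_of_hasDerivAt_of_integrableOn
    (fun v _ => hasDerivAt_phi2DerivFst_snd u v x) ?_ ?_
  · refine (integrable_of_abs_le_gaussianMajorant_snd ?_
      (abs_phi2DerivFstSnd_le hx le_rfl u)).integrableOn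
    unfold phi2DerivFstSnd phi2; fun_prop
  · refine (integrable_of_abs_le_gaussianMajorant_snd ?_
      (abs_phi2DerivFst_le hx le_rfl u)).integrableOn
    unfold phi2DerivFst phi2; fun_prop

lemma integral_Ici_phi2DerivFst (a v : ℝ) {x : ℝ} (hx : 0 < 1 - x ^ 2) :
    ∫ u in Ici a, phi2DerivFst u v x = -phi2 a v x := by
  rw [integral_Ici_eq_integral_Ioi]
  refine integral_Ioi_of_hasDerivAt_of_integrableOn
    (fun u _ => hasDerivAt_phi2_fst u v x) ?_ ?_
  · refine (integrable_of_abs_le_gaussianMajorant_fst ?_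
      (fun u => abs_phi2DerivFst_le hx le_rfl u v)).integrableOn
    unfold phi2DerivFst phi2; fun_prop
  · refine (integrable_of_abs_le_gaussianMajorant_fst ?_
      (fun u => abs_phi2_le hx le_rfl u v)).integrableOn
    unfold phi2; fun_prop

lemma continuous_phi2 (x : ℝ) : Continuous fun p : ℝ × ℝ => phi2 p.1 p.2 x := by
  unfold phi2; fun_prop

lemma continuous_phi2DerivFstSnd (x : ℝ) :
    Continuous fun p : ℝ × ℝ => phi2DerivFstSnd p.1 p.2 x := by
  unfold phi2DerivFstSnd phi2; fun_prop

lemma setIntegral_prod_phi2DerivFstSnd (a b : ℝ) {x : ℝ} (hx : 0 < 1 - x ^ 2) :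
    ∫ p in Ici a ×ˢ Ici b, phi2DerivFstSnd p.1 p.2 x = phi2 a b x := by
  have hint := integrable_of_abs_le_gaussianMajorant (continuous_phi2DerivFstSnd x)
    (fun p => abs_phi2DerivFstSnd_le hx le_rfl p.1 p.2)
  rw [Measure.volume_eq_prod] at hint ⊢
  rw [setIntegral_prod _ hint.integrableOn]
  simp only [integral_Ici_phi2DerivFstSnd _ b hx, integral_neg, integral_Ici_phi2DerivFst a b hx,
    neg_neg]

noncomputable def orthantProb (a b x : ℝ) : ℝ := ∫ p in Ici a ×ˢ Ici b, phi2 p.1 p.2 x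

lemma orthantProb_zero (a b : ℝ) :
    orthantProb a b 0 = (∫ z in Ici a, stdGaussPDF z) * (∫ z in Ici b, stdGaussPDF z) := by
  simp only [orthantProb, phi2_zero, Measure.volume_eq_prod]
  exact setIntegral_prod_mul stdGaussPDF stdGaussPDF _ _

lemma hasDerivAt_orthantProb (a b : ℝ) {x₀ : ℝ} (hx₀ : 0 < 1 - x₀ ^ 2) :
    HasDerivAt (orthantProb a b) (phi2 a b x₀) x₀ := by
  obtain ⟨δ, hδ, hδx₀⟩ := exists_between hx₀
  have hnhds : {x : ℝ | δ < 1 - x ^ 2} ∈ 𝓝 x₀ :=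
    (isOpen_lt continuous_const (by fun_prop)).mem_nhds hδx₀
  have hdiff := hasDerivAt_integral_of_dominated_loc_of_deriv_le
    (μ := volume.restrict (Ici a ×ˢ Ici b)) (F' := fun x p => phi2DerivFstSnd p.1 p.2 x)
    (bound := fun p => 2 / δ ^ 2 * (8 / (2 * π * √δ)) * gaussianMajorant p.1 p.2) hnhds
    (Eventually.of_forall fun x => (continuous_phi2 x).aestronglyMeasurable)
    (integrable_of_abs_le_gaussianMajorant (continuous_phi2 x₀)
      (fun p => abs_phi2_le hx₀ le_rfl p.1 p.2)).integrableOn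
    (continuous_phi2DerivFstSnd x₀).aestronglyMeasurable
    (ae_of_all _ fun p x hx => abs_phi2DerivFstSnd_le hδ (le_of_lt hx) p.1 p.2)
    (integrable_gaussianMajorant.const_mul _).integrableOn
    (ae_of_all _ fun p x hx => hasDerivAt_phi2_corr p.1 p.2 (hδ.trans hx))
  rw [← setIntegral_prod_phi2DerivFstSnd a b hx₀]
  exact hdiff.2

/-- Generalized arcsine law: for a bivariate standard Gaussian with correlation
`ρ ∈ (-1,1)` and thresholds `η₁, η₂`,
`P(Z₁ ≥ η₁, Z₂ ≥ η₂) = P(Z₁ ≥ η₁) P(Z₂ ≥ η₂) + ∫₀^ρ φ₂(η₁,η₂∣x) dx`. -/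
theorem generalized_arcsine_law (ρ : ℝ) (hρ : ρ ∈ Set.Ioo (-1 : ℝ) 1) (η₁ η₂ : ℝ) :
    ∫ p : ℝ × ℝ in {p : ℝ × ℝ | η₁ ≤ p.1 ∧ η₂ ≤ p.2}, phi2 p.1 p.2 ρ =
      (∫ z in Set.Ici η₁, stdGaussPDF z) * (∫ z in Set.Ici η₂, stdGaussPDF z) +
        ∫ x in (0 : ℝ)..ρ, phi2 η₁ η₂ x := by
  have hcorr : ∀ x ∈ uIcc 0 ρ, 0 < 1 - x ^ 2 := fun x hx => by
    obtain ⟨h₁, h₂⟩ := ordConnected_Ioo.uIcc_subset ⟨by norm_num, by norm_num⟩ hρ hx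
    nlinarith
  have hcont : ContinuousOn (phi2 η₁ η₂) (uIcc 0 ρ) := fun x hx =>
    (hasDerivAt_phi2_corr η₁ η₂ (hcorr x hx)).continuousAt.continuousWithinAt
  rw [intervalIntegral.integral_eq_sub_of_hasDerivAt
    (fun x hx => hasDerivAt_orthantProb η₁ η₂ (hcorr x hx)) hcont.intervalIntegrable,
    orthantProb_zero]
  change orthantProb η₁ η₂ ρ = _
  ring
end

section
/- Let ρ ∈ (-1,1), r > 0, and p = (1/π)·[arctan((r-ρ)/√(1-ρ²)) + arctan((r+ρ)/√(1-ρ²))]. If tan(πp) ≠ 0 then r = √((1-ρ²)/tan²(πp) + 1) − √(1-ρ²)/tan(πp). -/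
open Real

/-! With `s = √(1-ρ²)` the addition formula for `tan` gives `tan (π p) = 2 r s / (1 - r²)`,
so `s / tan (π p) = u := (1 - r²) / (2 r)`, and `r` is the positive root of `r² + 2 u r - 1 = 0`,
namely `√(u² + 1) - u`. -/

/-- Holds for all `a b`: when `a * b = 1` both sides are junk `0`, since `tan (± π / 2) = 0`. -/
theorem Real.tan_arctan_add_arctan (a b : ℝ) :
    tan (arctan a + arctan b) = (a + b) / (1 - a * b) := by
  have hsin (x : ℝ) : sin (arctan x) = x * cos (arctan x) := by
    rw [sin_arctan, cos_arctan, mul_one_div]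
  have hcd : cos (arctan a) * cos (arctan b) ≠ 0 :=
    (mul_pos (cos_arctan_pos a) (cos_arctan_pos b)).ne'
  rw [tan_eq_sin_div_cos, sin_add, cos_add, hsin a, hsin b, ← mul_div_mul_left (a + b) _ hcd]
  ring_nf

theorem Real.tan_arctan_div_add_arctan_div (x y : ℝ) {s : ℝ} (hs : s ≠ 0) :
    tan (arctan (x / s) + arctan (y / s)) = (x + y) * s / (s ^ 2 - x * y) := by
  rw [tan_arctan_add_arctan, ← mul_div_mul_right _ _ (pow_ne_zero 2 hs)]
  congr 1 <;> field_simp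

theorem sqrt_sq_add_one_sub_eq {r : ℝ} (hr : 0 < r) :
    √(((1 - r ^ 2) / (2 * r)) ^ 2 + 1) - (1 - r ^ 2) / (2 * r) = r := by
  have hsq : ((1 - r ^ 2) / (2 * r)) ^ 2 + 1 = ((1 + r ^ 2) / (2 * r)) ^ 2 := by
    field_simp
    ring
  rw [hsq, sqrt_sq (by positivity)]
  field_simp
  ring

/-- Inversion of the predominance probability formula: for `ρ ∈ (-1,1)`,
`r > 0` and `p = (1/π)(arctan((r-ρ)/√(1-ρ²)) + arctan((r+ρ)/√(1-ρ²)))`,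
if `tan (π p) ≠ 0` then `r = √((1-ρ²)/tan²(πp) + 1) − √(1-ρ²)/tan(πp)`. -/
theorem predominance_inversion (ρ r p : ℝ) (hρ : ρ ∈ Set.Ioo (-1 : ℝ) 1) (hr : 0 < r)
    (hp : p = (1 / Real.pi) *
        (Real.arctan ((r - ρ) / Real.sqrt (1 - ρ ^ 2)) +
          Real.arctan ((r + ρ) / Real.sqrt (1 - ρ ^ 2))))
    (htan : Real.tan (Real.pi * p) ≠ 0) :
    r = Real.sqrt ((1 - ρ ^ 2) / Real.tan (Real.pi * p) ^ 2 + 1) -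
        Real.sqrt (1 - ρ ^ 2) / Real.tan (Real.pi * p) := by
  obtain ⟨hρ₁, hρ₂⟩ := hρ
  set s := √(1 - ρ ^ 2)
  have hs : s ^ 2 = 1 - ρ ^ 2 := sq_sqrt (by nlinarith)
  have hs₀ : s ≠ 0 := by
    rintro hs₀
    simp only [hp, hs₀, div_zero, arctan_zero, add_zero, mul_zero, tan_zero] at htan
    exact htan rfl
  have htan_eq : tan (π * p) = 2 * r * s / (1 - r ^ 2) := by
    rw [hp, one_div, mul_inv_cancel_left₀ pi_ne_zero, tan_arctan_div_add_arctan_div _ _ hs₀, hs]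
    congr 1 <;> ring
  have hr₁ : 1 - r ^ 2 ≠ 0 := by
    rintro hr₁
    rw [htan_eq, hr₁, div_zero] at htan
    exact htan rfl
  have hst : s / tan (π * p) = (1 - r ^ 2) / (2 * r) := by
    rw [htan_eq]
    field_simp
  rw [← hs, ← div_pow, hst, sqrt_sq_add_one_sub_eq hr]
end

section
/- Let r_{ij} > 0 for all 1 ≤ i,j ≤ d with r_{ii} = 1, and let l(θ) = Σ_{1 ≤ i,j ≤ d} (θ_i − r_{ij} θ_j)². If ξ is a minimizer of l over the unit sphere S^{d-1} ⊂ ℝ^d, then all components of ξ have the same sign; i.e., either ξ_i ≥ 0 for all i or ξ_i ≤ 0 for all i. -/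
open Finset

/-- If `ξ` minimizes `l(θ) = Σ_{i,j} (θ i − r i j · θ j)²` over the unit
sphere, then all components of `ξ` have the same sign. -/
theorem minimizer_same_sign (d : ℕ) (r : Fin d → Fin d → ℝ)
    (hr : ∀ i j, 0 < r i j) (hrd : ∀ i, r i i = 1)
    (ξ : Fin d → ℝ) (hξ : ∑ i, ξ i ^ 2 = 1)
    (hmin : ∀ θ : Fin d → ℝ, ∑ i, θ i ^ 2 = 1 →
      ∑ i, ∑ j, (ξ i - r i j * ξ j) ^ 2 ≤ ∑ i, ∑ j, (θ i - r i j * θ j) ^ 2) :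
    (∀ i, 0 ≤ ξ i) ∨ (∀ i, ξ i ≤ 0) := by
  by_contra h
  push_neg at h
  obtain ⟨⟨a, ha⟩, ⟨b, hb⟩⟩ := h
  set θ : Fin d → ℝ := fun i => |ξ i| with hθ
  have hθ2 : ∑ i, θ i ^ 2 = 1 := by simpa [hθ, sq_abs] using hξ
  have key := hmin θ hθ2
  have hle : ∀ i j, (θ i - r i j * θ j) ^ 2 ≤ (ξ i - r i j * ξ j) ^ 2 := by
    intro i j
    have h1 : ξ i * ξ j ≤ |ξ i| * |ξ j| := by
      calc ξ i * ξ j ≤ |ξ i * ξ j| := le_abs_self _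
        _ = |ξ i| * |ξ j| := abs_mul _ _
    have h2 := hr i j
    have h3 := mul_le_mul_of_nonneg_left h1 h2.le
    simp only [hθ]
    rw [sub_sq, sub_sq, mul_pow, mul_pow, sq_abs, sq_abs]
    nlinarith [h3]
  have hsum_le : ∑ i, ∑ j, (θ i - r i j * θ j) ^ 2 ≤ ∑ i, ∑ j, (ξ i - r i j * ξ j) ^ 2 :=
    Finset.sum_le_sum fun i _ => Finset.sum_le_sum fun j _ => hle i j
  have heq : ∑ i, ∑ j, (θ i - r i j * θ j) ^ 2 = ∑ i, ∑ j, (ξ i - r i j * ξ j) ^ 2 :=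
    le_antisymm hsum_le key
  have hterm : (θ b - r b a * θ a) ^ 2 = (ξ b - r b a * ξ a) ^ 2 := by
    by_contra hne
    have hlt : (θ b - r b a * θ a) ^ 2 < (ξ b - r b a * ξ a) ^ 2 :=
      lt_of_le_of_ne (hle b a) hne
    have hstrict : ∑ i, ∑ j, (θ i - r i j * θ j) ^ 2 < ∑ i, ∑ j, (ξ i - r i j * ξ j) ^ 2 := by
      apply Finset.sum_lt_sum (fun i _ => Finset.sum_le_sum fun j _ => hle i j)
      exact ⟨b, Finset.mem_univ b, Finset.sum_lt_sum (fun j _ => hle b j)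
        ⟨a, Finset.mem_univ a, hlt⟩⟩
    linarith
  have hθb : θ b = ξ b := abs_of_pos hb
  have hθa : θ a = -ξ a := abs_of_neg ha
  have hrba := hr b a
  rw [hθb, hθa] at hterm
  nlinarith [mul_pos hrba (mul_pos hb (neg_pos.mpr ha))]
end
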